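/- arXiv:1410.5893 — 12 statements merged into one kernel-verified Lean document; each statement's English description precedes it below -/
import Mathlib

section
/- Let S be a unital ring and γ : S → ℝ a submultiplicative seminorm (i.e. γ(x+y) ≤ γ(x)+γ(y), γ(−x) = γ(x), γ(0)=0, and γ(xy) ≤ γ(x)γ(y) for all x,y ∈ S) such that γ(s^n) = γ(s)^n for every s ∈ S and every n ≥ 1, and such that there exists κ ∈ ℝ with γ(m·1_S) ≤ κ for every integer m. Then for any two commuting elements x, y ∈ S (i.e. xy = yx), one has γ(x+y) ≤ max{γ(x), γ(y)}. -/
open Filter Topology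

/-- If `γ` is a submultiplicative, power-multiplicative seminorm on a unital ring `S`
which is bounded on the integer multiples of `1`, then `γ` is ultrametric on
commuting elements. -/
theorem seminorm_ultrametric_of_powMul_of_boundedInt
    {S : Type*} [Ring S] (γ : S → ℝ)
    (hnonneg : ∀ x : S, 0 ≤ γ x)
    (h0 : γ 0 = 0)
    (hneg : ∀ x : S, γ (-x) = γ x)
    (hadd : ∀ x y : S, γ (x + y) ≤ γ x + γ y)
    (hmul : ∀ x y : S, γ (x * y) ≤ γ x * γ y)
    (hpow : ∀ x : S, ∀ n : ℕ, 1 ≤ n → γ (x ^ n) = γ x ^ n)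
    (κ : ℝ) (hκ : ∀ m : ℤ, γ ((m : S)) ≤ κ)
    {x y : S} (hxy : x * y = y * x) :
    γ (x + y) ≤ max (γ x) (γ y) := by
  set M : ℝ := max (γ x) (γ y) with hM
  have hM0 : 0 ≤ M := le_trans (hnonneg x) (le_max_left _ _)
  set D : ℝ := max κ 1 with hD
  have hD1 : 1 ≤ D := le_max_right _ _
  have hD0 : 0 ≤ D := zero_le_one.trans hD1
  have hcast : ∀ m : ℕ, γ ((m : S)) ≤ D := by
    intro m
    have := hκ (m : ℤ)
    push_cast at this
    exact this.trans (le_max_left _ _)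
  -- finite sum subadditivity
  have hsum : ∀ {ι : Type} (s : Finset ι) (f : ι → S),
      γ (∑ i ∈ s, f i) ≤ ∑ i ∈ s, γ (f i) := by
    intro ι s f
    induction s using Finset.cons_induction with
    | empty => simp [h0]
    | cons a s ha ih =>
      rw [Finset.sum_cons, Finset.sum_cons]
      exact (hadd _ _).trans (by linarith)
  -- bound on powers including 0
  have hpowle : ∀ (z : S), γ z ≤ M → ∀ k : ℕ, γ (z ^ k) ≤ D * M ^ k := by
    intro z hz k
    rcases Nat.eq_zero_or_pos k with hk | hk
    · subst hk
      simpa using hcast 1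
    · rw [hpow z k hk]
      calc γ z ^ k ≤ M ^ k := pow_le_pow_left₀ (hnonneg z) hz k
        _ ≤ D * M ^ k := le_mul_of_one_le_left (pow_nonneg hM0 k) hD1
  have hx : γ x ≤ M := le_max_left _ _
  have hy : γ y ≤ M := le_max_right _ _
  -- key inequality
  have key : ∀ n : ℕ, 1 ≤ n → γ (x + y) ^ n ≤ (n + 1) * (D * D * D) * M ^ n := by
    intro n hn
    rw [← hpow _ n hn]
    have hcomm : Commute x y := hxy
    rw [hcomm.add_pow]
    calc γ (∑ k ∈ Finset.range (n + 1), x ^ k * y ^ (n - k) * (n.choose k : S))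
        ≤ ∑ k ∈ Finset.range (n + 1), γ (x ^ k * y ^ (n - k) * (n.choose k : S)) :=
          hsum _ _
      _ ≤ ∑ k ∈ Finset.range (n + 1), (D * D * D) * M ^ n := by
          apply Finset.sum_le_sum
          intro k hk
          rw [Finset.mem_range] at hk
          have h1 : γ (x ^ k * y ^ (n - k) * (n.choose k : S)) ≤
              γ (x ^ k) * γ (y ^ (n - k)) * γ ((n.choose k : S)) := by
            refine (hmul _ _).trans ?_
            exact mul_le_mul_of_nonneg_right (hmul _ _) (hnonneg _)
          refine h1.trans ?_
          have h2 := hpowle x hx k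
          have h3 := hpowle y hy (n - k)
          have h4 := hcast (n.choose k)
          have hMk : (0:ℝ) ≤ M ^ k := pow_nonneg hM0 k
          have hMnk : (0:ℝ) ≤ M ^ (n - k) := pow_nonneg hM0 _
          calc γ (x ^ k) * γ (y ^ (n - k)) * γ ((n.choose k : S))
              ≤ (D * M ^ k) * (D * M ^ (n - k)) * D := by
                apply mul_le_mul
                · exact mul_le_mul h2 h3 (hnonneg _) (by positivity)
                · exact h4
                · exact hnonneg _
                · positivity
            _ = (D * D * D) * (M ^ k * M ^ (n - k)) := by ring
            _ = (D * D * D) * M ^ n := by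
                rw [← pow_add, Nat.add_sub_cancel' (Nat.lt_succ_iff.mp hk)]
      _ = (n + 1) * (D * D * D) * M ^ n := by
          rw [Finset.sum_const, Finset.card_range]
          push_cast
          ring
  set E : ℝ := D * D * D with hE
  have hE1 : 1 ≤ E := by nlinarith
  -- conclude
  rcases eq_or_lt_of_le hM0 with hMz | hMpos
  · -- M = 0
    have := key 1 le_rfl
    simp only [pow_one, ← hMz] at this
    linarith [this]
  · by_contra hcon
    push_neg at hcon
    have ha0 : 0 < γ (x + y) := hMpos.trans hcon
    set r : ℝ := γ (x + y) / M with hr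
    have hr1 : 1 < r := (one_lt_div hMpos).mpr hcon
    have hbound : ∀ n : ℕ, 1 ≤ n → r ^ n ≤ (n + 1) * E := by
      intro n hn
      rw [hr, div_pow, div_le_iff₀ (pow_pos hMpos n)]
      exact key n hn
    -- (n+1)*E / r^n → 0, contradiction with ≥ 1
    have htend : Tendsto (fun n : ℕ => ((n : ℝ) + 1) * E / r ^ n) atTop (𝓝 0) := by
      have h1 : Tendsto (fun n : ℕ => ((n : ℝ) + 1) / r ^ n) atTop (𝓝 0) := by
        have ha := tendsto_pow_const_div_const_pow_of_one_lt 1 hr1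
        have hb := tendsto_pow_const_div_const_pow_of_one_lt 0 hr1
        simpa [add_div] using ha.add hb
      have h2 := h1.const_mul E
      rw [mul_zero] at h2
      refine h2.congr (fun n => ?_)
      ring
    have hge : ∀ᶠ n : ℕ in atTop, (1:ℝ) ≤ ((n : ℝ) + 1) * E / r ^ n := by
      filter_upwards [eventually_ge_atTop 1] with n hn
      rw [le_div_iff₀ (pow_pos (zero_lt_one.trans hr1) n), one_mul]
      exact hbound n hn
    have : (1:ℝ) ≤ 0 := ge_of_tendsto htend hge
    linarith
end

section
/- Let 𝔸¹_ℤ be the set of multiplicative seminorms on the polynomial ring ℤ[X], equipped with the topology of pointwise convergence (as a subspace of the product space ℤ[X] → ℝ). Then: (1) 𝔸¹_ℤ is a second countable, locally compact, Hausdorff topological space; (2) the subset of ultrametric seminorms (those λ with λ(P+Q) ≤ max{λ(P), λ(Q)} for all P, Q) is closed in 𝔸¹_ℤ; and (3) for every M ∈ ℕ, the subset {λ ∈ 𝔸¹_ℤ : λ(X) ≤ M} is compact. -/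
/-! `𝔸¹_ℤ` is a closed subset of the product `ℤ[X] → ℝ`, and writing `P = ∑ aᵢ Xⁱ` gives
`λ(P) ≤ ∑ |aᵢ| λ(X)ⁱ`. Hence `{λ : λ(X) ≤ M}` is a closed subset of the compact box
`∏_P [0, ∑ |aᵢ| Mⁱ]`, so it is compact by Tychonoff; these sets are neighbourhoods of every
point with `λ(X) < M`, which gives local compactness. Second countability comes from the
countability of `ℤ[X]`, and the ultrametric inequality is a closed condition on each pair
of coordinates. -/

/-- A multiplicative seminorm on a commutative unital ring. -/
def IsMultSeminorm {T : Type*} [CommRing T] (lam : T → ℝ) : Prop :=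
  (∀ x : T, 0 ≤ lam x) ∧ lam 0 = 0 ∧ lam 1 = 1 ∧
    (∀ x y : T, lam (x + y) ≤ lam x + lam y) ∧
    (∀ x y : T, lam (x * y) = lam x * lam y)

/-- The affine analytic space `𝔸¹_ℤ`: multiplicative seminorms on `ℤ[X]`, as a subspace of
the product space `ℤ[X] → ℝ` (topology of pointwise convergence). -/
def A1Z : Set (Polynomial ℤ → ℝ) := {lam | IsMultSeminorm lam}

open Polynomial Set

instance : Countable ℤ[X] :=
  (AddMonoidAlgebra.coeff_injective.comp toFinsupp_injective).countable

namespace IsMultSeminorm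

variable {T : Type*} [CommRing T] {lam : T → ℝ} (h : IsMultSeminorm lam)
include h

theorem nonneg (x : T) : 0 ≤ lam x := h.1 x

theorem map_zero : lam 0 = 0 := h.2.1

theorem map_one : lam 1 = 1 := h.2.2.1

theorem add_le (x y : T) : lam (x + y) ≤ lam x + lam y := h.2.2.2.1 x y

theorem map_mul (x y : T) : lam (x * y) = lam x * lam y := h.2.2.2.2 x y

theorem map_pow (x : T) (n : ℕ) : lam (x ^ n) = lam x ^ n := by
  induction n with
  | zero => simpa using h.map_one
  | succ n ih => rw [pow_succ, pow_succ, h.map_mul, ih]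

theorem map_sum_le {ι : Type*} (s : Finset ι) (g : ι → T) :
    lam (∑ i ∈ s, g i) ≤ ∑ i ∈ s, lam (g i) :=
  Finset.le_sum_of_subadditive lam h.map_zero.le h.add_le s g

theorem map_neg (x : T) : lam (-x) = lam x := by
  have hsq : lam (-1) * lam (-1) = 1 := by rw [← h.map_mul, neg_one_mul, neg_neg, h.map_one]
  have hneg_one : lam (-1) = 1 := by nlinarith [h.nonneg (-1)]
  rw [neg_eq_neg_one_mul, h.map_mul, hneg_one, one_mul]

theorem map_natCast_le (n : ℕ) : lam n ≤ n := by
  induction n with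
  | zero => simp [h.map_zero]
  | succ n ih =>
    push_cast
    linarith [h.add_le n 1, h.map_one]

theorem map_intCast_le (n : ℤ) : lam n ≤ |(n : ℝ)| := by
  rcases Int.natAbs_eq n with hn | hn <;>
  · rw [hn]
    push_cast
    simpa [h.map_neg] using h.map_natCast_le n.natAbs

end IsMultSeminorm

theorem IsMultSeminorm.apply_le_sum_abs_coeff_mul_pow {lam : ℤ[X] → ℝ} (h : IsMultSeminorm lam)
    (P : ℤ[X]) : lam P ≤ ∑ i ∈ P.support, |(P.coeff i : ℝ)| * lam X ^ i := by
  conv_lhs => rw [P.as_sum_support_C_mul_X_pow]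
  refine (h.map_sum_le _ _).trans (Finset.sum_le_sum fun i _ => ?_)
  rw [h.map_mul, h.map_pow, eq_intCast C]
  exact mul_le_mul_of_nonneg_right (h.map_intCast_le _) (pow_nonneg (h.nonneg X) i)

theorem isClosed_setOf_isMultSeminorm {T : Type*} [CommRing T] :
    IsClosed {lam : T → ℝ | IsMultSeminorm lam} := by
  simp only [IsMultSeminorm, ofPred_and, ofPred_forall]
  refine .inter (isClosed_iInter fun x => isClosed_le continuous_const (continuous_apply x))
    (.inter (isClosed_eq (continuous_apply 0) continuous_const)
    (.inter (isClosed_eq (continuous_apply 1) continuous_const)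
    (.inter (isClosed_iInter fun x => isClosed_iInter fun y => ?_)
      (isClosed_iInter fun x => isClosed_iInter fun y => ?_))))
  · exact isClosed_le (continuous_apply _) ((continuous_apply x).add (continuous_apply y))
  · exact isClosed_eq (continuous_apply _) ((continuous_apply x).mul (continuous_apply y))

theorem isClosed_setOf_apply_add_le_max {T : Type*} [Add T] :
    IsClosed {lam : T → ℝ | ∀ x y, lam (x + y) ≤ max (lam x) (lam y)} := by
  simp only [ofPred_forall]
  exact isClosed_iInter fun x => isClosed_iInter fun y =>
    isClosed_le (continuous_apply _) ((continuous_apply x).max (continuous_apply y))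

theorem isCompact_A1Z_inter_setOf_apply_X_le (M : ℝ) :
    IsCompact (A1Z ∩ {lam | lam X ≤ M}) := by
  have hbox : A1Z ∩ {lam | lam X ≤ M} ⊆
      univ.pi fun P => Icc 0 (∑ i ∈ P.support, |(P.coeff i : ℝ)| * M ^ i) := by
    rintro lam ⟨h, hM⟩ P -
    refine ⟨h.nonneg P, (h.apply_le_sum_abs_coeff_mul_pow P).trans ?_⟩
    gcongr
    exacts [h.nonneg X, hM]
  exact (isCompact_univ_pi fun _ => isCompact_Icc).of_isClosed_subset
    (isClosed_setOf_isMultSeminorm.inter (isClosed_le (continuous_apply X) continuous_const)) hbox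

theorem isCompact_setOf_A1Z_apply_X_le (M : ℝ) :
    IsCompact {lam : A1Z | (lam : ℤ[X] → ℝ) X ≤ M} := by
  rw [Subtype.isCompact_iff]
  exact (Subtype.image_preimage_coe A1Z {lam | lam X ≤ M}).symm ▸
    isCompact_A1Z_inter_setOf_apply_X_le M

instance : WeaklyLocallyCompactSpace A1Z where
  exists_compact_mem_nhds lam := by
    have hcont : Continuous fun mu : A1Z => (mu : ℤ[X] → ℝ) X :=
      (continuous_apply X).comp continuous_subtype_val
    exact ⟨_, isCompact_setOf_A1Z_apply_X_le ((lam : ℤ[X] → ℝ) X + 1),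
      hcont.continuousAt.preimage_mem_nhds (Iic_mem_nhds (lt_add_one _))⟩

/-- `𝔸¹_ℤ` is second countable, locally compact and Hausdorff; the ultrametric seminorms
form a closed subset; and for each `M ∈ ℕ` the set `{λ : λ(X) ≤ M}` is compact. -/
theorem A1Z_topology_properties :
    SecondCountableTopology A1Z ∧
      LocallyCompactSpace A1Z ∧
      T2Space A1Z ∧
      IsClosed {lam : A1Z | ∀ P Q : Polynomial ℤ,
        (lam : Polynomial ℤ → ℝ) (P + Q)
          ≤ max ((lam : Polynomial ℤ → ℝ) P) ((lam : Polynomial ℤ → ℝ) Q)} ∧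
      ∀ M : ℕ, IsCompact {lam : A1Z | (lam : Polynomial ℤ → ℝ) Polynomial.X ≤ (M : ℝ)} :=
  ⟨inferInstance, inferInstance, inferInstance,
    isClosed_setOf_apply_add_le_max.preimage continuous_subtype_val,
    fun M => isCompact_setOf_A1Z_apply_X_le M⟩
end

section
/- Fix υ ∈ (0,1]. The set {λ ∈ 𝔸¹_ℤ : there exists t ∈ ℝ such that λ(P) = |P(t)|^υ for all P ∈ ℤ[X]} (where |·| is the Euclidean absolute value and P(t) denotes evaluation of the integer polynomial P at t) is a closed subset of 𝔸¹_ℤ. Equivalently: if λ is a multiplicative seminorm on ℤ[X] and (t_i) is a sequence of real numbers with |P(t_i)|^υ → λ(P) for every P ∈ ℤ[X], then there exists t ∈ ℝ with λ(P) = |P(t)|^υ for all P. -/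
/-- For fixed `υ ∈ (0,1]`, the image of `ℝ_υ` in `𝔸¹_ℤ`, i.e. the set of seminorms of the
form `P ↦ |P(t)|^υ` for some real `t`, is closed in `𝔸¹_ℤ`. -/
theorem image_of_R_upsilon_isClosed (υ : ℝ) (hυ : υ ∈ Set.Ioc (0 : ℝ) 1) :
    IsClosed {lam : A1Z | ∃ t : ℝ, ∀ P : Polynomial ℤ,
      (lam : Polynomial ℤ → ℝ) P = |(Polynomial.aeval t P : ℝ)| ^ υ} := by
  obtain ⟨hυ0, hυ1⟩ := hυ
  set F : ℝ → (Polynomial ℤ → ℝ) := fun t P => |(Polynomial.aeval t P : ℝ)| ^ υ with hF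
  have hFcont : Continuous F := by
    apply continuous_pi
    intro P
    have h1 : Continuous fun t : ℝ => |(Polynomial.aeval t P : ℝ)| :=
      (Polynomial.continuous_aeval P).abs
    exact h1.rpow_const (fun t => Or.inr hυ0.le)
  apply isClosed_of_closure_subset
  intro lam hlam
  -- pass to the ambient space
  have hset : {lam : A1Z | ∃ t : ℝ, ∀ P : Polynomial ℤ,
      (lam : Polynomial ℤ → ℝ) P = |(Polynomial.aeval t P : ℝ)| ^ υ}
      = Subtype.val ⁻¹' (Set.range F) := by
    ext μ
    simp only [Set.mem_setOf_eq, Set.mem_preimage, Set.mem_range]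
    constructor
    · rintro ⟨t, ht⟩; exact ⟨t, (funext fun P => (ht P).symm)⟩
    · rintro ⟨t, ht⟩; exact ⟨t, fun P => (congrFun ht P).symm⟩
  rw [hset] at hlam ⊢
  have h1 : (lam : Polynomial ℤ → ℝ) ∈ closure (Set.range F) :=
    continuous_subtype_val.closure_preimage_subset _ hlam
  set c : ℝ := (lam : Polynomial ℤ → ℝ) Polynomial.X + 1 with hc
  set U : Set (Polynomial ℤ → ℝ) := {g | g Polynomial.X < c} with hU
  have hUopen : IsOpen U := by
    have : U = (fun g : Polynomial ℤ → ℝ => g Polynomial.X) ⁻¹' Set.Iio c := rfl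
    rw [this]
    exact (continuous_apply _).isOpen_preimage _ isOpen_Iio
  have hlamU : (lam : Polynomial ℤ → ℝ) ∈ U := by
    simp only [hU, Set.mem_setOf_eq, hc]
    linarith
  have h2 : (lam : Polynomial ℤ → ℝ) ∈ closure (Set.range F ∩ U) := by
    rw [mem_closure_iff] at h1 ⊢
    intro o ho hxo
    obtain ⟨y, hy⟩ := h1 (o ∩ U) (ho.inter hUopen) ⟨hxo, hlamU⟩
    exact ⟨y, ⟨hy.1.1, hy.2, hy.1.2⟩⟩
  set M : ℝ := c ^ (1 / υ) with hM
  have hsub : Set.range F ∩ U ⊆ F '' Set.Icc (-M) M := by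
    rintro g ⟨⟨t, rfl⟩, hgU⟩
    refine ⟨t, ?_, rfl⟩
    have hgt : |t| ^ υ < c := by
      have : F t Polynomial.X = |t| ^ υ := by
        simp [hF, Polynomial.aeval_X]
      rw [hU, Set.mem_setOf_eq, this] at hgU
      exact hgU
    have hc0 : 0 < c := lt_of_le_of_lt (Real.rpow_nonneg (abs_nonneg t) υ) hgt
    have habs : |t| ≤ M := by
      have h3 : (|t| ^ υ) ^ (1 / υ) ≤ c ^ (1 / υ) :=
        Real.rpow_le_rpow (Real.rpow_nonneg (abs_nonneg t) υ) hgt.le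
          (by positivity)
      rwa [← Real.rpow_mul (abs_nonneg t), mul_one_div_cancel hυ0.ne',
        Real.rpow_one] at h3
    exact abs_le.mp habs
  have h3 : (lam : Polynomial ℤ → ℝ) ∈ F '' Set.Icc (-M) M := by
    have hclosed : IsClosed (F '' Set.Icc (-M) M) :=
      (isCompact_Icc.image hFcont).isClosed
    exact hclosed.closure_subset ((closure_mono hsub) h2)
  obtain ⟨t, _, ht⟩ := h3
  exact ⟨t, ht⟩
end

section
/- Fix a prime p and ω ∈ (0,∞). The set {λ ∈ 𝔸¹_ℤ : there exists s ∈ ℚ_p such that λ(P) = ‖P(s)‖_p^ω for all P ∈ ℤ[X]} (where ‖·‖_p is the p-adic norm on the field ℚ_p of p-adic numbers and P(s) denotes evaluation of the integer polynomial P at s) is a closed subset of 𝔸¹_ℤ. Equivalently: if λ is a multiplicative seminorm on ℤ[X] and (s_i) is a sequence in ℚ_p with ‖P(s_i)‖_p^ω → λ(P) for every P ∈ ℤ[X], then there exists s ∈ ℚ_p with λ(P) = ‖P(s)‖_p^ω for all P. -/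
/-- The range of `s ↦ (P ↦ ‖P(s)‖^ω)` is closed in the full product space `ℤ[X] → ℝ`. -/
theorem rangeClosed (p : ℕ) [Fact p.Prime] (ω : ℝ) (hω : 0 < ω) :
    IsClosed (Set.range (fun (s : ℚ_[p]) (P : Polynomial ℤ) =>
      ‖(Polynomial.aeval s P : ℚ_[p])‖ ^ ω)) := by
  set f : ℚ_[p] → (Polynomial ℤ → ℝ) := fun s P => ‖(Polynomial.aeval s P : ℚ_[p])‖ ^ ω with hf
  have hfc : Continuous f := by
    refine continuous_pi fun P => ?_
    have h1 : Continuous fun s : ℚ_[p] => ‖(Polynomial.aeval s P : ℚ_[p])‖ :=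
      P.continuous_aeval.norm
    exact h1.rpow_const fun s => Or.inr hω.le
  rw [← closure_eq_iff_isClosed]
  refine subset_antisymm (fun g hg => ?_) subset_closure
  -- g X coordinate is nonnegative
  have hX : (0:ℝ) ≤ g Polynomial.X := by
    have hcl : IsClosed {h : Polynomial ℤ → ℝ | 0 ≤ h Polynomial.X} :=
      isClosed_le continuous_const (continuous_apply _)
    have : Set.range f ⊆ {h : Polynomial ℤ → ℝ | 0 ≤ h Polynomial.X} := by
      rintro _ ⟨s, rfl⟩
      exact Real.rpow_nonneg (norm_nonneg _) ω
    exact (closure_minimal this hcl) hg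
  set c : ℝ := g Polynomial.X + 1 with hc
  have hc0 : 0 < c := by positivity
  set r : ℝ := c ^ (1/ω) with hr
  have hK : IsCompact (Metric.closedBall (0 : ℚ_[p]) r) := isCompact_closedBall _ _
  have hV : IsOpen {h : Polynomial ℤ → ℝ | h Polynomial.X < c} :=
    isOpen_lt (continuous_apply _) continuous_const
  have hgV : g ∈ {h : Polynomial ℤ → ℝ | h Polynomial.X < c} := by
    simp [hc]
  -- g is in the closure of range f ∩ V
  have hg2 : g ∈ closure (Set.range f ∩ {h | h Polynomial.X < c}) := by
    rw [mem_closure_iff_nhds] at hg ⊢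
    intro t ht
    obtain ⟨x, hx1, hx2⟩ := hg (t ∩ {h | h Polynomial.X < c})
      (Filter.inter_mem ht (hV.mem_nhds hgV))
    exact ⟨x, hx1.1, hx2, hx1.2⟩
  have hsub : Set.range f ∩ {h | h Polynomial.X < c} ⊆ f '' Metric.closedBall 0 r := by
    rintro _ ⟨⟨s, rfl⟩, hs⟩
    refine ⟨s, ?_, rfl⟩
    simp only [Set.mem_setOf_eq, hf] at hs
    simp only [Polynomial.aeval_X] at hs
    rw [Metric.mem_closedBall, dist_zero_right]
    calc ‖s‖ = (‖s‖ ^ ω) ^ (1/ω) := by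
          rw [← Real.rpow_mul (norm_nonneg s), mul_one_div_cancel hω.ne', Real.rpow_one]
      _ ≤ c ^ (1/ω) := Real.rpow_le_rpow (Real.rpow_nonneg (norm_nonneg s) ω) hs.le
          (by positivity)
  have himg : IsClosed (f '' Metric.closedBall (0:ℚ_[p]) r) :=
    (hK.image hfc).isClosed
  have : g ∈ f '' Metric.closedBall (0:ℚ_[p]) r :=
    himg.closure_subset ((closure_mono hsub) hg2)
  obtain ⟨s, _, rfl⟩ := this
  exact ⟨s, rfl⟩

/-- For a fixed prime `p` and `ω ∈ (0,∞)`, the image of `ℚ_p^ω` in `𝔸¹_ℤ`, i.e. the set of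
seminorms of the form `P ↦ ‖P(s)‖_p^ω` for some `s ∈ ℚ_p`, is closed in `𝔸¹_ℤ`. -/
theorem image_of_Qp_omega_isClosed (p : ℕ) [Fact p.Prime] (ω : ℝ) (hω : 0 < ω) :
    IsClosed {lam : A1Z | ∃ s : ℚ_[p], ∀ P : Polynomial ℤ,
      (lam : Polynomial ℤ → ℝ) P = ‖(Polynomial.aeval s P : ℚ_[p])‖ ^ ω} := by
  have : {lam : A1Z | ∃ s : ℚ_[p], ∀ P : Polynomial ℤ,
      (lam : Polynomial ℤ → ℝ) P = ‖(Polynomial.aeval s P : ℚ_[p])‖ ^ ω} =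
      Subtype.val ⁻¹' (Set.range (fun (s : ℚ_[p]) (P : Polynomial ℤ) =>
        ‖(Polynomial.aeval s P : ℚ_[p])‖ ^ ω)) := by
    ext lam
    constructor
    · rintro ⟨s, hs⟩; exact ⟨s, (funext fun P => (hs P).symm)⟩
    · rintro ⟨s, hs⟩; exact ⟨s, fun P => congrFun hs.symm P⟩
  rw [this]
  exact (rangeClosed p ω hω).preimage continuous_subtype_val
end

section
/- The map Φ : (0,1] × ℝ → (ℤ[X] → ℝ) defined by Φ(υ, t)(P) = |P(t)|^υ (where |·| is the Euclidean absolute value and P(t) is the evaluation of the integer polynomial P at t) is a topological embedding of (0,1] × ℝ (with the product topology) into the product space ℤ[X] → ℝ with the topology of pointwise convergence; that is, Φ is injective, continuous, and a homeomorphism onto its image. In particular, the union of the images in 𝔸¹_ℤ of the complete valuation fields ℝ_υ for υ ∈ (0,1] is homeomorphic to (0,1] × ℝ. -/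
/-!
Evaluating at `2` recovers the exponent, `Φ(υ, t)(2) = 2 ^ υ`, and then `Φ(υ, t)(X)` and
`Φ(υ, t)(X + 1)` recover `|t|` and `|t + 1|`, hence `t = (|t + 1| ^ 2 - |t| ^ 2 - 1) / 2`.
These formulas give a map `(ℤ[X] → ℝ) → ℝ × ℝ` which is continuous at every point of the image
of `Φ` and whose composite with `Φ` is the embedding `(0,1] × ℝ → ℝ × ℝ`; this forces `Φ` to be
an embedding.
-/

open Filter Topology Polynomial

namespace Topology

variable {α β γ : Type*} [TopologicalSpace α] [TopologicalSpace β] [TopologicalSpace γ]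
  {f : α → β} {g : β → γ}

lemma IsInducing.of_comp_of_continuousAt (hf : Continuous f) (hg : ∀ x, ContinuousAt g (f x))
    (hgf : IsInducing (g ∘ f)) : IsInducing f :=
  isInducing_iff_nhds.2 fun x => le_antisymm hf.continuousAt.le_comap <|
    calc comap f (𝓝 (f x)) ≤ comap f (comap g (𝓝 (g (f x)))) := comap_mono (hg x).le_comap
      _ = comap (g ∘ f) (𝓝 (g (f x))) := comap_comap
      _ = 𝓝 x := (hgf.nhds_eq_comap x).symm

lemma IsEmbedding.of_comp_of_continuousAt (hf : Continuous f) (hg : ∀ x, ContinuousAt g (f x))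
    (hgf : IsEmbedding (g ∘ f)) : IsEmbedding f :=
  ⟨hgf.isInducing.of_comp_of_continuousAt hf hg, hgf.injective.of_comp⟩

end Topology

noncomputable def powAbsEval (q : Set.Ioc (0 : ℝ) 1 × ℝ) (P : ℤ[X]) : ℝ :=
  |(aeval q.2 P : ℝ)| ^ (q.1 : ℝ)

section

variable (q : Set.Ioc (0 : ℝ) 1 × ℝ)

lemma continuous_powAbsEval : Continuous powAbsEval :=
  continuous_pi fun P =>
    ((P.continuous_aeval.comp continuous_snd).abs).rpow
      (continuous_subtype_val.comp continuous_fst) fun q => Or.inr q.1.2.1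

lemma powAbsEval_two : powAbsEval q 2 = 2 ^ (q.1 : ℝ) := by
  rw [powAbsEval, map_ofNat, abs_two]

lemma powAbsEval_rpow_inv (P : ℤ[X]) : powAbsEval q P ^ (q.1 : ℝ)⁻¹ = |(aeval q.2 P : ℝ)| :=
  Real.rpow_rpow_inv (abs_nonneg _) q.1.2.1.ne'

end

namespace powAbsEval

noncomputable def exponent (f : ℤ[X] → ℝ) : ℝ := Real.logb 2 (f 2)

noncomputable def point (f : ℤ[X] → ℝ) : ℝ :=
  ((f (X + 1) ^ (exponent f)⁻¹) ^ 2 - (f X ^ (exponent f)⁻¹) ^ 2 - 1) / 2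

lemma exponent_powAbsEval (q : Set.Ioc (0 : ℝ) 1 × ℝ) : exponent (powAbsEval q) = q.1 := by
  rw [exponent, powAbsEval_two, Real.logb_rpow two_pos (by norm_num)]

lemma point_powAbsEval (q : Set.Ioc (0 : ℝ) 1 × ℝ) : point (powAbsEval q) = q.2 := by
  simp only [point, exponent_powAbsEval, powAbsEval_rpow_inv, sq_abs, map_add, aeval_X, map_one]
  ring

lemma continuousAt_exponent {f : ℤ[X] → ℝ} (hf : f 2 ≠ 0) : ContinuousAt exponent f :=
  (Real.continuousAt_logb hf).comp (continuous_apply (2 : ℤ[X])).continuousAt (x := f)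

lemma continuousAt_point {f : ℤ[X] → ℝ} (hf : 0 < exponent f) : ContinuousAt point f := by
  have h2 : f 2 ≠ 0 := fun h => by simp [exponent, h] at hf
  have hinv := (continuousAt_exponent h2).inv₀ hf.ne'
  have hroot (P : ℤ[X]) : ContinuousAt (fun g : ℤ[X] → ℝ => g P ^ (exponent g)⁻¹) f :=
    (continuous_apply P).continuousAt.rpow hinv (Or.inr (inv_pos.2 hf))
  exact ((((hroot _).pow 2).sub ((hroot _).pow 2)).sub continuousAt_const).div_const 2

end powAbsEval

/-- The map `Φ : (0,1] × ℝ → (ℤ[X] → ℝ)`, `Φ(υ,t)(P) = |P(t)|^υ`, is injective, continuous,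
and a topological embedding (a homeomorphism onto its image), where `ℤ[X] → ℝ` carries the
topology of pointwise convergence. -/
theorem embedding_R_upsilon_family :
    Function.Injective
        (fun q : Set.Ioc (0 : ℝ) 1 × ℝ =>
          fun P : Polynomial ℤ => |(Polynomial.aeval q.2 P : ℝ)| ^ (q.1 : ℝ)) ∧
      Continuous
        (fun q : Set.Ioc (0 : ℝ) 1 × ℝ =>
          fun P : Polynomial ℤ => |(Polynomial.aeval q.2 P : ℝ)| ^ (q.1 : ℝ)) ∧
      Topology.IsEmbedding
        (fun q : Set.Ioc (0 : ℝ) 1 × ℝ =>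
          fun P : Polynomial ℤ => |(Polynomial.aeval q.2 P : ℝ)| ^ (q.1 : ℝ)) := by
  let recover (f : ℤ[X] → ℝ) : ℝ × ℝ := (powAbsEval.exponent f, powAbsEval.point f)
  have hleft : recover ∘ powAbsEval = fun q => ((q.1 : ℝ), q.2) :=
    funext fun q => Prod.ext (powAbsEval.exponent_powAbsEval q) (powAbsEval.point_powAbsEval q)
  have hcont (q : Set.Ioc (0 : ℝ) 1 × ℝ) : ContinuousAt recover (powAbsEval q) := by
    refine (powAbsEval.continuousAt_exponent ?_).prodMk (powAbsEval.continuousAt_point ?_)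
    · rw [powAbsEval_two]; positivity
    · rw [powAbsEval.exponent_powAbsEval]; exact q.1.2.1
  have hemb : IsEmbedding powAbsEval :=
    .of_comp_of_continuousAt continuous_powAbsEval hcont
      (hleft ▸ IsEmbedding.subtypeVal.prodMap .id)
  exact ⟨hemb.injective, hemb.continuous, hemb⟩
end

section
/- Fix a prime q. The map Ψ : (0,∞) × ℚ_q → (ℤ[X] → ℝ) defined by Ψ(ω, s)(P) = ‖P(s)‖_q^ω (where ‖·‖_q is the q-adic norm on ℚ_q and P(s) is the evaluation of the integer polynomial P at s) is a topological embedding of (0,∞) × ℚ_q (with the product topology) into the product space ℤ[X] → ℝ with the topology of pointwise convergence; that is, Ψ is injective, continuous, and a homeomorphism onto its image. -/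
/-!
The exponent is read off from the value at a nonzero integer constant `c` with `‖c‖ ≠ 1`
(`c = q` for `ℚ_q`), because `ω ↦ ‖c‖ ^ ω` has the continuous inverse `logb ‖c‖`. Once `ω`
converges to `ω₀ > 0`, taking `ω`-th roots gives `‖P(s)‖ → ‖P(s₀)‖` for every `P`. For a rational
approximation `a / d` of `s₀`, the polynomial `d X - a` gives `‖s - a / d‖ = ‖d s - a‖ / ‖d‖`,
so `s → s₀` by density of `ℚ`. Hence `Ψ` is inducing, and an embedding since its domain is
Hausdorff.
-/

open Filter Topology Polynomial

section RealPow

variable {α : Type*} {l : Filter α}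

theorem Filter.Tendsto.of_rpow_base {b : ℝ} (hb₀ : 0 < b) (hb₁ : b ≠ 1) {ω : α → ℝ} {ω₀ : ℝ}
    (h : Tendsto (fun i => b ^ ω i) l (𝓝 (b ^ ω₀))) : Tendsto ω l (𝓝 ω₀) := by
  simpa only [Real.logb_rpow hb₀ hb₁] using h.logb (b := b) (Real.rpow_pos_of_pos hb₀ ω₀).ne'

theorem Filter.Tendsto.of_rpow {t ω : α → ℝ} {t₀ ω₀ : ℝ} (ht : ∀ i, 0 ≤ t i) (ht₀ : 0 ≤ t₀)
    (hω₀ : 0 < ω₀) (h : Tendsto (fun i => t i ^ ω i) l (𝓝 (t₀ ^ ω₀)))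
    (hω : Tendsto ω l (𝓝 ω₀)) : Tendsto t l (𝓝 t₀) := by
  have hroot := h.rpow (hω.inv₀ hω₀.ne') (Or.inr (inv_pos.2 hω₀))
  rw [Real.rpow_rpow_inv ht₀ hω₀.ne'] at hroot
  refine hroot.congr' ?_
  filter_upwards [hω.eventually_ne hω₀.ne'] with i hi
  exact Real.rpow_rpow_inv (ht i) hi

end RealPow

section NormedField

variable {K : Type*} [NormedField K]

theorem norm_aeval_den_mul_X_sub_num [CharZero K] (s : K) (r : ℚ) :
    ‖aeval s (C (r.den : ℤ) * X - C r.num)‖ = ‖(r.den : K)‖ * ‖s - r‖ := by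
  rw [← norm_mul, mul_sub, Rat.cast_def, mul_div_cancel₀ _ (Nat.cast_ne_zero.2 r.den_ne_zero)]
  simp

theorem tendsto_of_tendsto_norm_aeval [CharZero K] (hℚ : DenseRange ((↑) : ℚ → K)) {α : Type*}
    {l : Filter α} {s : α → K} {s₀ : K}
    (h : ∀ P : ℤ[X], Tendsto (fun i => ‖aeval (s i) P‖) l (𝓝 ‖aeval s₀ P‖)) :
    Tendsto s l (𝓝 s₀) := by
  refine Metric.tendsto_nhds.2 fun ε hε => ?_
  obtain ⟨r, hr⟩ := hℚ.exists_dist_lt s₀ (half_pos hε)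
  have hden : 0 < ‖(r.den : K)‖ := norm_pos_iff.2 (Nat.cast_ne_zero.2 r.den_ne_zero)
  have hlim := h (C (r.den : ℤ) * X - C r.num)
  simp only [norm_aeval_den_mul_X_sub_num] at hlim
  have hlt : ‖(r.den : K)‖ * ‖s₀ - r‖ < ‖(r.den : K)‖ * (ε / 2) :=
    (mul_lt_mul_iff_right₀ hden).2 (dist_eq_norm s₀ r ▸ hr)
  filter_upwards [hlim.eventually_lt_const hlt] with i hi
  calc dist (s i) s₀ ≤ dist (s i) r + dist s₀ r := dist_triangle_right _ _ _
    _ < ε / 2 + ε / 2 := add_lt_add (dist_eq_norm (s i) r ▸ (mul_lt_mul_iff_right₀ hden).1 hi) hr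
    _ = ε := add_halves ε

variable (K) in
noncomputable def powNormEval (x : Set.Ioi (0 : ℝ) × K) (P : ℤ[X]) : ℝ :=
  ‖aeval x.2 P‖ ^ (x.1 : ℝ)

theorem continuous_powNormEval : Continuous (powNormEval K) :=
  continuous_pi fun P =>
    ((P.continuous_aeval.comp continuous_snd).norm.rpow
      (continuous_subtype_val.comp continuous_fst) fun x => Or.inr x.1.2)

theorem tendsto_of_tendsto_powNormEval [CharZero K] (hℚ : DenseRange ((↑) : ℚ → K)) {c : ℤ}
    (hc₀ : c ≠ 0) (hc₁ : ‖(c : K)‖ ≠ 1) {α : Type*} {l : Filter α} {x : α → Set.Ioi (0 : ℝ) × K}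
    {x₀ : Set.Ioi (0 : ℝ) × K} (h : Tendsto (powNormEval K ∘ x) l (𝓝 (powNormEval K x₀))) :
    Tendsto x l (𝓝 x₀) := by
  have hP P : Tendsto (fun i => ‖aeval (x i).2 P‖ ^ ((x i).1 : ℝ)) l
      (𝓝 (‖aeval x₀.2 P‖ ^ (x₀.1 : ℝ))) :=
    tendsto_pi_nhds.1 h P
  have hω : Tendsto (fun i => ((x i).1 : ℝ)) l (𝓝 x₀.1) := by
    refine .of_rpow_base (norm_pos_iff.2 (Int.cast_ne_zero.2 hc₀)) hc₁ ?_
    simpa using hP (C c)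
  have hs : Tendsto (fun i => (x i).2) l (𝓝 x₀.2) :=
    tendsto_of_tendsto_norm_aeval hℚ fun P =>
      (hP P).of_rpow (fun _ => norm_nonneg _) (norm_nonneg _) x₀.1.2 hω
  exact (tendsto_subtype_rng.2 hω).prodMk_nhds hs

theorem isEmbedding_powNormEval [CharZero K] (hℚ : DenseRange ((↑) : ℚ → K)) {c : ℤ}
    (hc₀ : c ≠ 0) (hc₁ : ‖(c : K)‖ ≠ 1) : IsEmbedding (powNormEval K) := by
  refine IsInducing.isEmbedding (isInducing_iff_nhds.2 fun x => ?_)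
  exact le_antisymm (continuous_powNormEval.tendsto x).le_comap
    (tendsto_of_tendsto_powNormEval hℚ hc₀ hc₁ tendsto_comap)

end NormedField

/-- For a fixed prime `q`, the map `Ψ : (0,∞) × ℚ_q → (ℤ[X] → ℝ)`,
`Ψ(ω,s)(P) = ‖P(s)‖_q^ω`, is injective, continuous, and a topological embedding
(a homeomorphism onto its image), where `ℤ[X] → ℝ` carries the topology of
pointwise convergence. -/
theorem embedding_Qq_omega_family (q : ℕ) [Fact q.Prime] :
    Function.Injective
        (fun x : Set.Ioi (0 : ℝ) × ℚ_[q] =>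
          fun P : Polynomial ℤ => ‖(Polynomial.aeval x.2 P : ℚ_[q])‖ ^ (x.1 : ℝ)) ∧
      Continuous
        (fun x : Set.Ioi (0 : ℝ) × ℚ_[q] =>
          fun P : Polynomial ℤ => ‖(Polynomial.aeval x.2 P : ℚ_[q])‖ ^ (x.1 : ℝ)) ∧
      Topology.IsEmbedding
        (fun x : Set.Ioi (0 : ℝ) × ℚ_[q] =>
          fun P : Polynomial ℤ => ‖(Polynomial.aeval x.2 P : ℚ_[q])‖ ^ (x.1 : ℝ)) := by
  have hq : q.Prime := Fact.out
  have hnorm : ‖((q : ℤ) : ℚ_[q])‖ ≠ 1 := by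
    rw [Int.cast_natCast, Padic.norm_p]
    exact inv_ne_one.2 (Nat.cast_ne_one.2 hq.ne_one)
  have hemb : IsEmbedding (powNormEval ℚ_[q]) :=
    isEmbedding_powNormEval (Padic.denseRange_ratCast q) (Int.natCast_ne_zero.2 hq.ne_zero) hnorm
  exact ⟨hemb.injective, continuous_powNormEval, hemb⟩
end

section
/- Let r ∈ ℚ and let (p_i) be a sequence of primes with p_i → ∞. Then for every polynomial P ∈ ℤ[X], the sequence ‖P(r)‖_{p_i} (the p_i-adic norm of the rational number P(r)) converges to 0 if P(r) = 0, and to 1 otherwise. In other words, in 𝔸¹_ℤ the images of r under the canonical maps from the p_i-adic fields ℚ_{p_i} converge to the image of r in ℚ equipped with the trivial valuation; hence the image of ℚ with the trivial valuation is contained in the closure of the union over all primes p of the images of ℚ_p. -/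
lemma padicNorm_eq_one_of_large (q : ℚ) (hq : q ≠ 0) (p : ℕ) (hp : p.Prime)
    (h1 : ¬ (p : ℤ) ∣ q.num) (h2 : ¬ p ∣ q.den) : padicNorm p q = 1 := by
  haveI : Fact p.Prime := ⟨hp⟩
  rw [← Rat.num_div_den q, padicNorm.div, (padicNorm.int_eq_one_iff q.num).mpr h1,
    (padicNorm.nat_eq_one_iff q.den).mpr h2]
  norm_num

/-- Let `r ∈ ℚ` and let `(p_i)` be a sequence of primes tending to `∞`. For every
`P ∈ ℤ[X]`, the sequence `‖P(r)‖_{p_i}` converges to `0` if `P(r) = 0` and to `1`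
otherwise; i.e. the images of `r` under the `p_i`-adic valuations converge in `𝔸¹_ℤ`
to the image of `r` in `ℚ` with the trivial valuation. -/
theorem tendsto_padicNorm_of_primes_atTop (r : ℚ) (p : ℕ → ℕ) (hp : ∀ i, (p i).Prime)
    (htop : Filter.Tendsto p Filter.atTop Filter.atTop) (P : Polynomial ℤ) :
    Filter.Tendsto (fun i => (padicNorm (p i) (Polynomial.aeval r P) : ℝ)) Filter.atTop
      (nhds (if (Polynomial.aeval r P : ℚ) = 0 then (0 : ℝ) else 1)) := by
  set q : ℚ := Polynomial.aeval r P with hq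
  by_cases h : q = 0
  · simp only [h, if_pos rfl, padicNorm.zero]
    simpa using tendsto_const_nhds (α := ℝ)
  · rw [if_neg h]
    have hnum : q.num ≠ 0 := Rat.num_ne_zero.mpr h
    have hev : ∀ᶠ i in Filter.atTop, (padicNorm (p i) q : ℝ) = 1 := by
      have : ∀ᶠ i in Filter.atTop, p i > max q.num.natAbs q.den :=
        htop.eventually_gt_atTop _
      filter_upwards [this] with i hi
      have h1 : ¬ (p i : ℤ) ∣ q.num := by
        intro hd
        have hle : (p i : ℤ) ≤ |q.num| := Int.le_of_dvd (abs_pos.mpr hnum) ((dvd_abs _ _).mpr hd)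
        have : p i ≤ q.num.natAbs := by
          rwa [Int.abs_eq_natAbs, Int.ofNat_le] at hle
        omega
      have h2 : ¬ p i ∣ q.den := by
        intro hd
        have : p i ≤ q.den := Nat.le_of_dvd q.pos hd
        omega
      rw [padicNorm_eq_one_of_large q h (p i) (hp i) h1 h2]
      norm_num
    exact Filter.Tendsto.congr' (Filter.EventuallyEq.symm hev) tendsto_const_nhds
end

section
/- For complex numbers r, s ∈ ℂ, one has |P(r)| = |P(s)| for every polynomial P ∈ ℤ[X] (where |·| is the complex absolute value and P(r) is the evaluation of the integer polynomial P at r) if and only if s = r or s equals the complex conjugate of r. Consequently, the canonical map from ℂ to 𝔸¹_ℤ sending r to the seminorm P ↦ |P(r)| identifies two complex numbers exactly when they are equal or complex conjugate, so the image of ℂ in 𝔸¹_ℤ may be identified with the closed upper half plane (the 'folding up' of ℂ along the real axis). -/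
/-!
Conjugation fixes integer coefficients, so `|P(r̄)| = |P(r)|`. Conversely, `P = X` and
`P = X - 1` give `|s| = |r|` and `|s - 1| = |r - 1|`; as `|z - 1|² = |z|² - 2 Re z + 1`, this
forces `Re s = Re r`, and then `Im s = ± Im r`.
-/

open Polynomial ComplexConjugate

theorem Polynomial.norm_aeval_conj {K : Type*} [RCLike K] (P : ℤ[X]) (z : K) :
    ‖aeval (conj z) P‖ = ‖aeval z P‖ := by
  rw [← aeval_map_algebraMap ℝ, aeval_conj, RCLike.norm_conj, aeval_map_algebraMap]

namespace Complex

theorem re_eq_of_norm_eq_of_norm_sub_one_eq {r s : ℂ} (h₀ : ‖r‖ = ‖s‖)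
    (h₁ : ‖r - 1‖ = ‖s - 1‖) : r.re = s.re := by
  have hsq : ∀ z : ℂ, ‖z - 1‖ ^ 2 = ‖z‖ ^ 2 - 2 * z.re + 1 := fun z => by
    simp only [Complex.sq_norm, normSq_sub, map_one, mul_one]
    ring
  have := hsq r
  rw [h₁, hsq s, h₀] at this
  linarith

theorem eq_or_eq_conj_of_re_eq_of_norm_eq {r s : ℂ} (hre : r.re = s.re) (hnorm : ‖r‖ = ‖s‖) :
    s = r ∨ s = conj r := by
  have him : s.im ^ 2 = r.im ^ 2 := by
    rw [← sq_norm_sub_sq_re, ← sq_norm_sub_sq_re, hre, hnorm]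
  rcases sq_eq_sq_iff_eq_or_eq_neg.mp him with him | him
  · exact Or.inl (ext hre.symm him)
  · exact Or.inr (ext (by rw [conj_re, hre]) (by rw [conj_im, him]))

end Complex

/-- For `r, s ∈ ℂ`, one has `|P(r)| = |P(s)|` for every `P ∈ ℤ[X]` if and only if `s = r`
or `s` is the complex conjugate of `r`. -/
theorem abs_aeval_eq_iff_eq_or_conj (r s : ℂ) :
    (∀ P : Polynomial ℤ,
        ‖Polynomial.aeval r P‖ = ‖Polynomial.aeval s P‖) ↔
      (s = r ∨ s = (starRingEnd ℂ) r) := by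
  constructor
  · intro h
    have h₀ := h X
    have h₁ := h (X - 1)
    simp only [map_sub, aeval_X, map_one] at h₀ h₁
    exact Complex.eq_or_eq_conj_of_re_eq_of_norm_eq
      (Complex.re_eq_of_norm_eq_of_norm_sub_one_eq h₀ h₁) h₀
  · rintro (rfl | rfl) P
    · rfl
    · exact (norm_aeval_conj P r).symm
end

section
/- Let q be a prime and n ∈ ℤ. Let (p_i) be a sequence of primes, (ω_i) a sequence in (0,∞), and for each i let s_i ∈ ℚ_{p_i} (an element of the p_i-adic field). Then the following are equivalent: (1) for every polynomial P ∈ ℤ[X], the sequence ‖P(s_i)‖_{p_i}^{ω_i} converges to 0 if q divides P(n), and to 1 otherwise; (2) ω_i → ∞ and there exists i_0 ∈ ℕ such that for every i ≥ i_0 one has p_i = q and ‖s_i − n‖_q < 1 (i.e. s_i ∈ n + q·ℤ_q, where ℤ_q = {s ∈ ℚ_q : ‖s‖_q ≤ 1}). -/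
/-!
If `‖s - n‖_q < 1` then `s ∈ ℤ_q` and `P(s) ≡ P(n) mod q`, so `‖P(s)‖_q` is at most `1/q` when
`q ∣ P(n)` and equals `1` otherwise; raising to powers `ω_i → ∞` gives the limits `0` and `1`.
Conversely, testing with `P = q` forces `p_i = q` eventually (as `‖q‖_p = 1` for `p ≠ q`) and then
`q^(-ω_i) → 0`, i.e. `ω_i → ∞`; testing with `P = X - n` forces `‖s_i - n‖_q < 1` eventually.
-/

open Polynomial Filter Topology

namespace PadicInt

variable {p : ℕ} [Fact p.Prime]

theorem norm_le_inv_of_norm_lt_one {x : ℤ_[p]} (hx : ‖x‖ < 1) : ‖x‖ ≤ (p : ℝ)⁻¹ := by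
  simpa using (norm_le_pow_iff_norm_lt_pow_add_one x (-1)).2 (by simpa using hx)

theorem norm_aeval_lt_one_iff {x : ℤ_[p]} {n : ℤ} (hx : ‖x - n‖ < 1) (P : ℤ[X]) :
    ‖aeval x P‖ < 1 ↔ (p : ℤ) ∣ P.eval n := by
  have hcongr := (padic_polynomial_dist P x n).trans_lt hx
  rw [norm_lt_one_iff_dvd] at hcongr ⊢
  rw [dvd_iff_dvd_of_dvd_sub hcongr, ← eq_intCast (algebraMap ℤ ℤ_[p]),
    aeval_algebraMap_apply_eq_algebraMap_eval, eq_intCast]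
  simpa using pow_p_dvd_int_iff (p := p) 1 (P.eval n)

theorem coe_aeval (x : ℤ_[p]) (P : ℤ[X]) : ((aeval x P : ℤ_[p]) : ℚ_[p]) = aeval (x : ℚ_[p]) P :=
  (aeval_algHom_apply Coe.ringHom.toIntAlgHom x P).symm

end PadicInt

namespace Padic

variable {p : ℕ} [Fact p.Prime]

theorem norm_natCast_of_prime {q : ℕ} (hq : q.Prime) :
    ‖(q : ℚ_[p])‖ = if p = q then (q : ℝ)⁻¹ else 1 := by
  split_ifs with h
  · subst h; exact norm_p
  · exact norm_natCast_eq_one_iff.2 ((Nat.coprime_primes Fact.out hq).2 h)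

theorem exists_padicInt_of_norm_sub_intCast_lt_one {s : ℚ_[p]} {n : ℤ}
    (hs : ‖s - (n : ℚ_[p])‖ < 1) : ∃ x : ℤ_[p], (x : ℚ_[p]) = s ∧ ‖x - n‖ < 1 := by
  have hs1 : ‖s‖ ≤ 1 := by
    simpa using (nonarchimedean (s - n : ℚ_[p]) n).trans (max_le hs.le (norm_int_le_one n))
  exact ⟨⟨s, hs1⟩, rfl, by rwa [PadicInt.norm_def]⟩

theorem norm_aeval_le_inv_of_dvd {s : ℚ_[p]} {n : ℤ} (hs : ‖s - (n : ℚ_[p])‖ < 1) (P : ℤ[X])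
    (hP : (p : ℤ) ∣ P.eval n) : ‖aeval s P‖ ≤ (p : ℝ)⁻¹ := by
  obtain ⟨x, rfl, hx⟩ := exists_padicInt_of_norm_sub_intCast_lt_one hs
  rw [← PadicInt.coe_aeval, ← PadicInt.norm_def]
  exact PadicInt.norm_le_inv_of_norm_lt_one ((PadicInt.norm_aeval_lt_one_iff hx P).2 hP)

theorem norm_aeval_eq_one_of_not_dvd {s : ℚ_[p]} {n : ℤ} (hs : ‖s - (n : ℚ_[p])‖ < 1) (P : ℤ[X])
    (hP : ¬(p : ℤ) ∣ P.eval n) : ‖aeval s P‖ = 1 := by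
  obtain ⟨x, rfl, hx⟩ := exists_padicInt_of_norm_sub_intCast_lt_one hs
  rw [← PadicInt.coe_aeval, ← PadicInt.norm_def]
  exact (PadicInt.norm_le_one _).antisymm
    (not_lt.1 (mt (PadicInt.norm_aeval_lt_one_iff hx P).1 hP))

end Padic

namespace Real

theorem tendsto_rpow_nhds_zero_iff {ι : Type*} {l : Filter ι} {b : ℝ} (hb₀ : 0 < b) (hb₁ : b < 1)
    {ω : ι → ℝ} : Tendsto (fun i => b ^ ω i) l (𝓝 0) ↔ Tendsto ω l atTop := by
  refine ⟨fun h => ?_, (tendsto_rpow_atTop_of_base_lt_one b (by linarith) hb₁).comp⟩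
  have hpos : Tendsto (fun i => b ^ ω i) l (𝓝[>] 0) :=
    tendsto_nhdsWithin_iff.2 ⟨h, .of_forall fun i => rpow_pos_of_pos hb₀ _⟩
  refine ((tendsto_logb_nhdsGT_zero_of_base_lt_one hb₀ hb₁).comp hpos).congr fun i => ?_
  exact logb_rpow hb₀ hb₁.ne

end Real

theorem tendsto_inv_prime_rpow_nhds_zero_iff (q : ℕ) [hq : Fact q.Prime] {ι : Type*}
    {l : Filter ι} {ω : ι → ℝ} :
    Tendsto (fun i => (q : ℝ)⁻¹ ^ ω i) l (𝓝 0) ↔ Tendsto ω l atTop :=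
  Real.tendsto_rpow_nhds_zero_iff (by have := hq.out.pos; positivity)
    (inv_lt_one_of_one_lt₀ (mod_cast hq.out.one_lt))

section Sequences

variable {ι : Type*} {l : Filter ι} {q : ℕ} [Fact q.Prime] {p : ι → ℕ} [∀ i, Fact (p i).Prime]
  {ω : ι → ℝ}

theorem tendsto_atTop_and_eventually_eq_of_tendsto_norm_natCast_rpow
    (h : Tendsto (fun i => ‖(q : ℚ_[p i])‖ ^ ω i) l (𝓝 0)) :
    Tendsto ω l atTop ∧ ∀ᶠ i in l, p i = q := by
  have hpq : ∀ᶠ i in l, p i = q := by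
    filter_upwards [h.eventually (gt_mem_nhds one_pos)] with i hi
    by_contra hne
    simp [Padic.norm_natCast_of_prime Fact.out, hne] at hi
  refine ⟨(tendsto_inv_prime_rpow_nhds_zero_iff q).1 (h.congr' ?_), hpq⟩
  filter_upwards [hpq] with i hi
  simp [Padic.norm_natCast_of_prime Fact.out, hi]

theorem tendsto_norm_aeval_rpow {n : ℤ} {s : ∀ i, ℚ_[p i]} (hω : Tendsto ω l atTop)
    (hs : ∀ᶠ i in l, p i = q ∧ ‖s i - (n : ℚ_[p i])‖ < 1) (P : ℤ[X]) :
    Tendsto (fun i => ‖aeval (s i) P‖ ^ ω i) l (𝓝 (if (q : ℤ) ∣ P.eval n then 0 else 1)) := by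
  split_ifs with hP
  · refine squeeze_zero' (.of_forall fun i => by positivity) ?_
      ((tendsto_inv_prime_rpow_nhds_zero_iff q).2 hω)
    filter_upwards [hs, hω.eventually_ge_atTop 0] with i ⟨hpq, hsi⟩ hωi
    refine Real.rpow_le_rpow (norm_nonneg _) ?_ hωi
    simpa [hpq] using Padic.norm_aeval_le_inv_of_dvd hsi P (by rwa [hpq])
  · refine tendsto_const_nhds.congr' ?_
    filter_upwards [hs] with i ⟨hpq, hsi⟩
    rw [Padic.norm_aeval_eq_one_of_not_dvd hsi P (by rwa [hpq]), Real.one_rpow]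

end Sequences

theorem tendsto_to_resClass_iff_general (q : ℕ) [Fact q.Prime] (n : ℤ)
    (p : ℕ → ℕ) [∀ i, Fact (p i).Prime] (ω : ℕ → ℝ)
    (s : ∀ i, ℚ_[p i]) :
    (∀ P : Polynomial ℤ,
        Filter.Tendsto (fun i => ‖(Polynomial.aeval (s i) P : ℚ_[p i])‖ ^ ω i)
          Filter.atTop (nhds (if (q : ℤ) ∣ P.eval n then (0 : ℝ) else 1))) ↔
      (Filter.Tendsto ω Filter.atTop Filter.atTop ∧
        ∃ i₀ : ℕ, ∀ i ≥ i₀, p i = q ∧ ‖s i - (n : ℚ_[p i])‖ < 1) := by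
  refine ⟨fun H => ?_, fun ⟨hω, i₀, hs⟩ =>
    tendsto_norm_aeval_rpow hω (eventually_atTop.2 ⟨i₀, hs⟩)⟩
  obtain ⟨hω, hpq⟩ :=
    tendsto_atTop_and_eventually_eq_of_tendsto_norm_natCast_rpow (by simpa using H (C (q : ℤ)))
  have hX : Tendsto (fun i => ‖s i - (n : ℚ_[p i])‖ ^ ω i) atTop (𝓝 0) := by
    have hX := H (X - C n)
    rw [if_pos (by simp)] at hX
    exact hX.congr fun i => by simp
  have hs : ∀ᶠ i in atTop, ‖s i - (n : ℚ_[p i])‖ < 1 := by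
    filter_upwards [hX.eventually (gt_mem_nhds one_pos), hω.eventually_gt_atTop 0] with i hi hωi
    exact (Real.rpow_lt_one_iff' (norm_nonneg _) hωi).1 hi
  exact ⟨hω, eventually_atTop.1 (hpq.and hs)⟩

/-- Let `q` be a prime, `n ∈ ℤ`, `(p_i)` a sequence of primes, `(ω_i)` a sequence in
`(0,∞)`, and `s_i ∈ ℚ_{p_i}`. The images of the `s_i` under `ℚ_{p_i}^{ω_i}` converge in
`𝔸¹_ℤ` to the image of the residue class of `n` in `ℤ/qℤ` (trivial valuation) iff
`ω_i → ∞` and eventually `p_i = q` with `s_i ∈ n + q·ℤ_q`. -/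
theorem tendsto_to_resClass_iff (q : ℕ) [Fact q.Prime] (n : ℤ)
    (p : ℕ → ℕ) [∀ i, Fact (p i).Prime] (ω : ℕ → ℝ) (hω : ∀ i, 0 < ω i)
    (s : ∀ i, ℚ_[p i]) :
    (∀ P : Polynomial ℤ,
        Filter.Tendsto (fun i => ‖(Polynomial.aeval (s i) P : ℚ_[p i])‖ ^ ω i)
          Filter.atTop (nhds (if (q : ℤ) ∣ P.eval n then (0 : ℝ) else 1))) ↔
      (Filter.Tendsto ω Filter.atTop Filter.atTop ∧
        ∃ i₀ : ℕ, ∀ i ≥ i₀, p i = q ∧ ‖s i - (n : ℚ_[p i])‖ < 1) :=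
  tendsto_to_resClass_iff_general q n p ω s
end

section
/- Let m ∈ ℤ and n ∈ ℕ with m and n relatively prime. Let (p_i) be a sequence of primes and (k_i) a sequence of integers. Then the following are equivalent: (1) for every polynomial P ∈ ℤ[X], the sequence whose i-th term is 0 if p_i divides P(k_i) and 1 otherwise converges to 0 if P(m/n) = 0 (evaluation in ℚ) and to 1 otherwise; (2) p_i → ∞ and there exists i_0 ∈ ℕ such that for all i ≥ i_0 one has n·k_i ≡ m (mod p_i). -/
/-!
Since the terms take only the values `0` and `1`, condition (1) says that for every `P ∈ ℤ[X]`,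
eventually `p_i ∣ P(k_i)` exactly when `P(m/n) = 0`. Testing against the constants `b!` forces
`p_i → ∞`, and testing against `m - nX` gives the congruence. Conversely, with `d = deg P` the
integer `N = n^d P(m/n)` satisfies `n^d P(k_i) ≡ N (mod p_i)` as soon as `n k_i ≡ m`; once `p_i`
exceeds `n` and `|N|`, the prime `p_i` divides `P(k_i)` iff it divides `N`, i.e. iff `N = 0`.
-/

open Polynomial Filter Topology

theorem tendsto_ite_nhds_ite_iff {ι X : Type*} [TopologicalSpace X] [T1Space X] {l : Filter ι}
    {x y : X} (hxy : x ≠ y) {q : ι → Prop} [DecidablePred q] {c : Prop} [Decidable c] :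
    Tendsto (fun i => if q i then x else y) l (𝓝 (if c then x else y)) ↔ ∀ᶠ i in l, q i ↔ c := by
  constructor
  · intro h
    have hne : (if c then x else y) ≠ (if c then y else x) := by split_ifs <;> simp [hxy, hxy.symm]
    filter_upwards [h.eventually (compl_singleton_mem_nhds hne)] with i hi
    by_cases hq : q i <;> by_cases hc : c <;> simp_all
  · intro h
    refine tendsto_const_nhds.congr' ?_
    filter_upwards [h] with i hi
    simp only [hi]

theorem tendsto_atTop_iff_eventually_not_intCast_dvd {ι : Type*} {l : Filter ι} {p : ι → ℕ}
    (hp : ∀ i, 0 < p i) :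
    Tendsto p l atTop ↔ ∀ N : ℤ, N ≠ 0 → ∀ᶠ i in l, ¬ (p i : ℤ) ∣ N := by
  constructor
  · intro h N hN
    filter_upwards [h.eventually_gt_atTop N.natAbs] with i hi hdvd
    exact hi.not_ge (Nat.le_of_dvd (Int.natAbs_pos.2 hN) (Int.natCast_dvd.1 hdvd))
  · intro h
    refine tendsto_atTop.2 fun b => ?_
    filter_upwards [h (b.factorial : ℤ) (by positivity)] with i hi
    by_contra! hlt
    exact hi (Int.natCast_dvd_natCast.2 (Nat.dvd_factorial (hp i) hlt.le))

theorem eventually_intCast_dvd_iff_eq_zero {ι : Type*} {l : Filter ι} {p : ι → ℕ}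
    (hp : ∀ i, 0 < p i) (h : Tendsto p l atTop) (N : ℤ) :
    ∀ᶠ i in l, (p i : ℤ) ∣ N ↔ N = 0 := by
  rcases eq_or_ne N 0 with rfl | hN
  · simp
  · filter_upwards [(tendsto_atTop_iff_eventually_not_intCast_dvd hp).1 h N hN] with i hi
    simp [hi, hN]

theorem Prime.dvd_iff_dvd_of_dvd_pow_mul_sub {R : Type*} [CommRing R] {p n a N : R} {d : ℕ}
    (hp : Prime p) (hpn : ¬ p ∣ n) (h : p ∣ n ^ d * a - N) : p ∣ a ↔ p ∣ N := by
  calc p ∣ a ↔ p ∣ n ^ d * a := by rw [hp.dvd_mul, or_iff_right (mt hp.dvd_of_dvd_pow hpn)]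
    _ ↔ p ∣ N := ⟨fun ha => (dvd_sub_right ha).1 h, fun hN => (dvd_sub_left hN).1 h⟩

namespace Polynomial

theorem mul_sub_dvd_pow_natDegree_mul_eval_sub_scaleRoots_eval {R : Type*} [CommRing R]
    (P : R[X]) (n k m : R) :
    n * k - m ∣ n ^ P.natDegree * P.eval k - (P.scaleRoots n).eval m := by
  rw [← scaleRoots_eval_mul]
  exact sub_dvd_eval_sub _ _ _

theorem aeval_eq_zero_iff_scaleRoots_eval_eq_zero {R K : Type*} [CommRing R] [CommRing K]
    [IsDomain K] [Algebra R K] [FaithfulSMul R K] (P : R[X]) {m n : R} {x : K} (hn : n ≠ 0)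
    (hx : algebraMap R K n * x = algebraMap R K m) :
    aeval x P = 0 ↔ (P.scaleRoots n).eval m = 0 := by
  have hinj := FaithfulSMul.algebraMap_injective R K
  have hscale : algebraMap R K ((P.scaleRoots n).eval m) =
      algebraMap R K n ^ P.natDegree * aeval x P := by
    rw [← aeval_algebraMap_apply_eq_algebraMap_eval, ← hx, aeval_def, scaleRoots_eval₂_mul,
      aeval_def]
  rw [← map_eq_zero_iff _ hinj, hscale,
    mul_eq_zero_iff_left (pow_ne_zero _ ((map_ne_zero_iff _ hinj).2 hn))]

end Polynomial

theorem tendsto_resClasses_to_rational_iff_general (m : ℤ) (n : ℕ) (hn : 0 < n)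
    (p : ℕ → ℕ) (hp : ∀ i, (p i).Prime) (k : ℕ → ℤ) :
    (∀ P : Polynomial ℤ,
        Filter.Tendsto (fun i => if ((p i : ℤ)) ∣ P.eval (k i) then (0 : ℝ) else 1)
          Filter.atTop
          (nhds (if (Polynomial.aeval ((m : ℚ) / (n : ℚ)) P : ℚ) = 0 then (0 : ℝ) else 1))) ↔
      (Filter.Tendsto p Filter.atTop Filter.atTop ∧
        ∃ i₀ : ℕ, ∀ i ≥ i₀, Int.ModEq (p i : ℤ) ((n : ℤ) * k i) m) := by
  have hp₀ (i : ℕ) : 0 < p i := (hp i).pos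
  have hn₀ : (n : ℤ) ≠ 0 := by exact_mod_cast hn.ne'
  simp only [tendsto_ite_nhds_ite_iff zero_ne_one]
  constructor
  · intro h
    refine ⟨(tendsto_atTop_iff_eventually_not_intCast_dvd hp₀).2 fun N hN => ?_, ?_⟩
    · simpa [hN] using h (C N)
    · obtain ⟨i₀, hi₀⟩ := eventually_atTop.1 (h (C m - C (n : ℤ) * X))
      exact ⟨i₀, fun i hi => Int.modEq_iff_dvd.2 (by simpa using (hi₀ i hi).2 (by simp [field]))⟩
  · rintro ⟨htop, i₀, hmod⟩ P
    rw [aeval_eq_zero_iff_scaleRoots_eval_eq_zero P hn₀ (by simp [field])]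
    filter_upwards [eventually_ge_atTop i₀, eventually_intCast_dvd_iff_eq_zero hp₀ htop n,
      eventually_intCast_dvd_iff_eq_zero hp₀ htop ((P.scaleRoots n).eval m)] with i hi hpn hN
    have hcong : (p i : ℤ) ∣ n ^ P.natDegree * P.eval (k i) - (P.scaleRoots n).eval m :=
      (hmod i hi).symm.dvd.trans (mul_sub_dvd_pow_natDegree_mul_eval_sub_scaleRoots_eval P _ _ _)
    exact ((Nat.prime_iff_prime_int.1 (hp i)).dvd_iff_dvd_of_dvd_pow_mul_sub
      (by simpa [hn.ne'] using hpn) hcong).trans hN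

/-- Let `m ∈ ℤ` and `n ∈ ℕ` be relatively prime, `(p_i)` a sequence of primes and
`(k_i)` a sequence of integers. The images of the residue classes of `k_i` in `ℤ/p_iℤ`
(trivial valuations) converge in `𝔸¹_ℤ` to the image of `m/n ∈ ℚ` (trivial valuation)
iff `p_i → ∞` and eventually `n·k_i ≡ m (mod p_i)`. -/
theorem tendsto_resClasses_to_rational_iff (m : ℤ) (n : ℕ) (hn : 0 < n)
    (hmn : IsCoprime m (n : ℤ)) (p : ℕ → ℕ) (hp : ∀ i, (p i).Prime) (k : ℕ → ℤ) :
    (∀ P : Polynomial ℤ,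
        Filter.Tendsto (fun i => if ((p i : ℤ)) ∣ P.eval (k i) then (0 : ℝ) else 1)
          Filter.atTop
          (nhds (if (Polynomial.aeval ((m : ℚ) / (n : ℚ)) P : ℚ) = 0 then (0 : ℝ) else 1))) ↔
      (Filter.Tendsto p Filter.atTop Filter.atTop ∧
        ∃ i₀ : ℕ, ∀ i ≥ i₀, Int.ModEq (p i : ℤ) ((n : ℤ) * k i) m) :=
  tendsto_resClasses_to_rational_iff_general m n hn p hp k
end

section
/- Let m ∈ ℤ and n ∈ ℕ with m and n relatively prime. Let (υ_i) be a sequence in (0,1] and (t_i) a sequence of real numbers. Then the following are equivalent: (1) for every polynomial P ∈ ℤ[X], the sequence |P(t_i)|^{υ_i} (Euclidean absolute value) converges to 0 if P(m/n) = 0 (evaluation in ℚ) and to 1 otherwise; (2) υ_i → 0 and |t_i − m/n|^{υ_i} → 0. -/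
/-!
Testing on the constant polynomial 2 gives `2 ^ υ i → 1`, i.e. `υ i → 0`; testing on
`den • X - num`, which vanishes at `q`, dominates `|t i - q| ^ υ i` since `den ≥ 1`.
Conversely, `min x 1 ≤ x ^ υ ≤ max 1 x` for `υ ∈ [0, 1]`, so the hypothesis forces `t i → q`.
Then `|P (t i)| ^ υ i → |P q| ^ 0 = 1` when `P q ≠ 0`, while for `P q = 0` writing
`P = (X - q) Q` gives `|P (t i)| ^ υ i ≤ |t i - q| ^ υ i * max 1 |Q (t i)| → 0`.
-/

open Filter Polynomial Real Topology

section RpowLimits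

variable {α : Type*} {l : Filter α} {υ : α → ℝ}

theorem min_le_rpow {x y : ℝ} (hx : 0 ≤ x) (hy₀ : 0 ≤ y) (hy₁ : y ≤ 1) : min x 1 ≤ x ^ y := by
  rcases le_total 1 x with h | h
  · exact (min_le_right x 1).trans (one_le_rpow h hy₀)
  rcases hx.eq_or_lt with rfl | hx
  · exact (min_le_left 0 1).trans (rpow_nonneg le_rfl y)
  calc min x 1 ≤ x ^ (1 : ℝ) := by rw [rpow_one]; exact min_le_left x 1
    _ ≤ x ^ y := rpow_le_rpow_of_exponent_ge hx h hy₁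

theorem rpow_le_max_one {x y : ℝ} (hx : 0 ≤ x) (hy₀ : 0 ≤ y) (hy₁ : y ≤ 1) : x ^ y ≤ max 1 x := by
  rcases le_total x 1 with h | h
  · exact (rpow_le_one hx h hy₀).trans (le_max_left 1 x)
  calc x ^ y ≤ x ^ (1 : ℝ) := rpow_le_rpow_of_exponent_le h hy₁
    _ = x := rpow_one x
    _ ≤ max 1 x := le_max_right 1 x

theorem tendsto_zero_of_tendsto_rpow_one {b : ℝ} (hb₀ : 0 < b) (hb₁ : b ≠ 1)
    (h : Tendsto (fun i => b ^ υ i) l (𝓝 1)) : Tendsto υ l (𝓝 0) := by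
  simpa [logb_rpow hb₀ hb₁] using h.logb (b := b) one_ne_zero

theorem tendsto_zero_of_tendsto_rpow_zero {a : α → ℝ} (ha : ∀ i, 0 ≤ a i)
    (hυ : ∀ i, υ i ∈ Set.Icc (0 : ℝ) 1) (h : Tendsto (fun i => a i ^ υ i) l (𝓝 0)) :
    Tendsto a l (𝓝 0) := by
  have hmin : Tendsto (fun i => min (a i) 1) l (𝓝 0) :=
    squeeze_zero (fun i => le_min (ha i) zero_le_one)
      (fun i => min_le_rpow (ha i) (hυ i).1 (hυ i).2) h
  refine hmin.congr' ?_
  filter_upwards [hmin.eventually (gt_mem_nhds one_pos)] with i hi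
  exact min_eq_left (min_lt_iff.1 hi |>.resolve_right (lt_irrefl 1)).le

theorem tendsto_abs_rpow_one {a : α → ℝ} {L : ℝ} (ha : Tendsto a l (𝓝 L)) (hL : L ≠ 0)
    (hυ : Tendsto υ l (𝓝 0)) : Tendsto (fun i => |a i| ^ υ i) l (𝓝 1) := by
  simpa using ha.abs.rpow hυ (Or.inl (abs_ne_zero.2 hL))

theorem tendsto_abs_mul_rpow_zero {x y : α → ℝ} {L : ℝ} (hυ : ∀ i, υ i ∈ Set.Icc (0 : ℝ) 1)
    (hx : Tendsto (fun i => |x i| ^ υ i) l (𝓝 0)) (hy : Tendsto y l (𝓝 L)) :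
    Tendsto (fun i => |x i * y i| ^ υ i) l (𝓝 0) := by
  have hbound : ∀ i, |x i * y i| ^ υ i ≤ |x i| ^ υ i * max 1 |y i| := fun i => by
    rw [abs_mul, mul_rpow (abs_nonneg _) (abs_nonneg _)]
    exact mul_le_mul_of_nonneg_left (rpow_le_max_one (abs_nonneg _) (hυ i).1 (hυ i).2)
      (rpow_nonneg (abs_nonneg _) _)
  refine squeeze_zero (fun i => rpow_nonneg (abs_nonneg _) _) hbound ?_
  simpa using hx.mul (tendsto_const_nhds.max hy.abs)

theorem tendsto_abs_eval_rpow_zero_of_isRoot {t : α → ℝ} {p : ℝ[X]} {c : ℝ} (hp : p.IsRoot c)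
    (hυ : ∀ i, υ i ∈ Set.Icc (0 : ℝ) 1) (ht : Tendsto t l (𝓝 c))
    (h : Tendsto (fun i => |t i - c| ^ υ i) l (𝓝 0)) :
    Tendsto (fun i => |p.eval (t i)| ^ υ i) l (𝓝 0) := by
  rw [← mul_divByMonic_eq_iff_isRoot.2 hp]
  simpa only [eval_mul, eval_sub, eval_X, eval_C, Function.comp_apply] using
    tendsto_abs_mul_rpow_zero hυ h ((p /ₘ (X - C c)).continuous.tendsto c |>.comp ht)

end RpowLimits

theorem aeval_den_mul_X_sub_num {K : Type*} [Field K] [CharZero K] (q : ℚ) (x : K) :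
    aeval x (C (q.den : ℤ) * X - C q.num) = q.den * (x - q) := by
  simp [mul_sub]
  exact_mod_cast q.den_mul_eq_num.symm

theorem tendsto_abs_aeval_rpow_iff {α : Type*} {l : Filter α} (q : ℚ) {υ : α → ℝ}
    (hυ : ∀ i, υ i ∈ Set.Icc (0 : ℝ) 1) (t : α → ℝ) :
    (∀ P : ℤ[X], Tendsto (fun i => |aeval (t i) P| ^ υ i) l
        (𝓝 (if aeval q P = 0 then 0 else 1))) ↔
      Tendsto υ l (𝓝 0) ∧ Tendsto (fun i => |t i - q| ^ υ i) l (𝓝 0) := by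
  constructor
  · intro h
    have hυ₀ : Tendsto υ l (𝓝 0) :=
      tendsto_zero_of_tendsto_rpow_one two_pos (by norm_num) (by simpa [map_ofNat] using h 2)
    have hlin := h (C (q.den : ℤ) * X - C q.num)
    simp only [aeval_den_mul_X_sub_num, Rat.cast_id, sub_self, mul_zero, ↓reduceIte] at hlin
    refine ⟨hυ₀, squeeze_zero (fun i => rpow_nonneg (abs_nonneg _) _) (fun i => ?_) hlin⟩
    have hden : (1 : ℝ) ≤ |(q.den : ℝ)| := by rw [Nat.abs_cast]; exact_mod_cast q.den_pos
    refine rpow_le_rpow (abs_nonneg _) ?_ (hυ i).1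
    rw [abs_mul]
    exact le_mul_of_one_le_left (abs_nonneg _) hden
  · rintro ⟨hυ₀, h⟩ P
    have ht : Tendsto t l (𝓝 q) := by
      rw [tendsto_iff_norm_sub_tendsto_zero]
      exact tendsto_zero_of_tendsto_rpow_zero (fun i => norm_nonneg _) hυ h
    split_ifs with hP
    · have hroot : (P.map (algebraMap ℤ ℝ)).IsRoot q := by
        rw [IsRoot, eval_map_algebraMap]
        exact (aeval_algebraMap_eq_zero_iff ℝ q P).2 hP
      simpa only [eval_map_algebraMap] using tendsto_abs_eval_rpow_zero_of_isRoot hroot hυ ht h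
    · have hP' : aeval (q : ℝ) P ≠ 0 := (aeval_algebraMap_eq_zero_iff ℝ q P).not.2 hP
      exact tendsto_abs_rpow_one ((P.continuous_aeval.tendsto _).comp ht) hP' hυ₀

theorem tendsto_reals_to_rational_iff_general (m : ℤ) (n : ℕ) (υ : ℕ → ℝ)
    (hυ : ∀ i, υ i ∈ Set.Ioc (0 : ℝ) 1) (t : ℕ → ℝ) :
    (∀ P : Polynomial ℤ,
        Filter.Tendsto (fun i => |(Polynomial.aeval (t i) P : ℝ)| ^ υ i) Filter.atTop
          (nhds (if (Polynomial.aeval ((m : ℚ) / (n : ℚ)) P : ℚ) = 0 then (0 : ℝ) else 1))) ↔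
      (Filter.Tendsto υ Filter.atTop (nhds 0) ∧
        Filter.Tendsto (fun i => |t i - (m : ℝ) / (n : ℝ)| ^ υ i) Filter.atTop (nhds 0)) := by
  simpa only [Rat.cast_div, Rat.cast_intCast, Rat.cast_natCast] using
    tendsto_abs_aeval_rpow_iff ((m : ℚ) / n) (fun i => Set.Ioc_subset_Icc_self (hυ i)) t

/-- Let `m ∈ ℤ` and `n ∈ ℕ` be relatively prime, `(υ_i)` a sequence in `(0,1]` and
`(t_i)` a sequence of reals. The images of the `t_i` under `ℝ_{υ_i}` converge in `𝔸¹_ℤ`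
to the image of `m/n ∈ ℚ` (trivial valuation) iff `υ_i → 0` and `|t_i − m/n|^{υ_i} → 0`. -/
theorem tendsto_reals_to_rational_iff (m : ℤ) (n : ℕ) (hn : 0 < n)
    (hmn : IsCoprime m (n : ℤ)) (υ : ℕ → ℝ) (hυ : ∀ i, υ i ∈ Set.Ioc (0 : ℝ) 1)
    (t : ℕ → ℝ) :
    (∀ P : Polynomial ℤ,
        Filter.Tendsto (fun i => |(Polynomial.aeval (t i) P : ℝ)| ^ υ i) Filter.atTop
          (nhds (if (Polynomial.aeval ((m : ℚ) / (n : ℚ)) P : ℚ) = 0 then (0 : ℝ) else 1))) ↔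
      (Filter.Tendsto υ Filter.atTop (nhds 0) ∧
        Filter.Tendsto (fun i => |t i - (m : ℝ) / (n : ℝ)| ^ υ i) Filter.atTop (nhds 0)) :=
  tendsto_reals_to_rational_iff_general m n υ hυ t
end

section
/- Let m ∈ ℤ and n ∈ ℕ with m and n relatively prime. Let (p_i) be a sequence of primes, (ω_i) a sequence in (0,∞), and for each i let s_i ∈ ℚ_{p_i} (an element of the p_i-adic field). Then the following are equivalent: (1) for every polynomial P ∈ ℤ[X], the sequence ‖P(s_i)‖_{p_i}^{ω_i} converges to 0 if P(m/n) = 0 (evaluation in ℚ) and to 1 otherwise; (2) for every positive integer k, ‖k‖_{p_i}^{ω_i} → 1, and ‖s_i − m/n‖_{p_i}^{ω_i} → 0 (where m/n is regarded as an element of ℚ_{p_i} via the canonical embedding ℚ ⊆ ℚ_{p_i}). -/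
open Filter Topology Polynomial

/-! For `ω > 0`, `x ↦ ‖x‖ ^ ω` is again a nonarchimedean absolute value. Hence sequences whose
values tend to `0` are closed under finite sums, and adding such a sequence to one whose values
tend to some `L > 0` does not change the values eventually. If `‖k‖ ^ ωᵢ → 1` for all positive
integers `k`, the same holds for all nonzero rationals, and the Taylor expansion
`P(s) = P(q) + ∑_{j ≥ 1} cⱼ (s - q)^j` with rational `cⱼ` gives `‖P(sᵢ)‖ ^ ωᵢ → 0` or `1`
according as `P(q) = 0` or not. Conversely, the polynomials `P = k` and `P = n X - m` recover
the two conditions. -/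

theorem rpow_norm_add_le_max {E : Type*} [SeminormedAddGroup E] [IsUltrametricDist E] {w : ℝ}
    (hw : 0 ≤ w) (x y : E) : ‖x + y‖ ^ w ≤ max (‖x‖ ^ w) (‖y‖ ^ w) := by
  rcases le_max_iff.mp (IsUltrametricDist.norm_add_le_max x y) with h | h
  · exact le_max_of_le_left (Real.rpow_le_rpow (norm_nonneg _) h hw)
  · exact le_max_of_le_right (Real.rpow_le_rpow (norm_nonneg _) h hw)

theorem Polynomial.aeval_sub_aeval_ratCast_eq_sum {A : Type*} [Field A] [CharZero A]
    (Q : ℚ[X]) (q : ℚ) (x : A) :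
    aeval x Q - (aeval q Q : A) =
      ∑ j ∈ Finset.range Q.natDegree, (taylor q Q).coeff (j + 1) • (x - q) ^ (j + 1) := by
  have hx : aeval x Q = aeval (x - q) (taylor q Q) := by
    rw [taylor_apply, aeval_comp]
    simp
  rw [hx, aeval_eq_sum_range, natDegree_taylor, Finset.sum_range_succ', taylor_coeff_zero,
    coe_aeval_eq_eval]
  simp

section

variable {ι : Type*} {l : Filter ι} {K : ι → Type*} {ω : ι → ℝ}

section

variable [∀ i, SeminormedAddCommGroup (K i)] [∀ i, IsUltrametricDist (K i)]

theorem tendsto_rpow_norm_add_zero (hω : ∀ i, 0 ≤ ω i) {f g : ∀ i, K i}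
    (hf : Tendsto (fun i => ‖f i‖ ^ ω i) l (𝓝 0)) (hg : Tendsto (fun i => ‖g i‖ ^ ω i) l (𝓝 0)) :
    Tendsto (fun i => ‖f i + g i‖ ^ ω i) l (𝓝 0) := by
  refine squeeze_zero (fun i => by positivity) (fun i => (rpow_norm_add_le_max (hω i) _ _).trans
    (max_le_add_of_nonneg (by positivity) (by positivity))) ?_
  simpa using hf.add hg

theorem tendsto_rpow_norm_sum_zero (hω : ∀ i, 0 < ω i) {κ : Type*} (s : Finset κ)
    {f : κ → ∀ i, K i} (hf : ∀ j ∈ s, Tendsto (fun i => ‖f j i‖ ^ ω i) l (𝓝 0)) :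
    Tendsto (fun i => ‖∑ j ∈ s, f j i‖ ^ ω i) l (𝓝 0) := by
  simp_rw [← Finset.sum_apply]
  refine Finset.sum_induction f (fun g => Tendsto (fun i => ‖g i‖ ^ ω i) l (𝓝 0))
    (fun _ _ => tendsto_rpow_norm_add_zero fun i => (hω i).le) ?_ hf
  simpa [Real.zero_rpow (hω _).ne'] using tendsto_const_nhds

theorem tendsto_rpow_norm_add_of_tendsto_zero (hω : ∀ i, 0 < ω i) {a d : ∀ i, K i} {L : ℝ}
    (hL : 0 < L) (ha : Tendsto (fun i => ‖a i‖ ^ ω i) l (𝓝 L))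
    (hd : Tendsto (fun i => ‖d i‖ ^ ω i) l (𝓝 0)) :
    Tendsto (fun i => ‖a i + d i‖ ^ ω i) l (𝓝 L) := by
  refine ha.congr' ?_
  filter_upwards [ha.eventually (lt_mem_nhds (half_lt_self hL)),
    hd.eventually (gt_mem_nhds (half_pos hL))] with i hai hdi
  have hlt : ‖d i‖ < ‖a i‖ :=
    (Real.rpow_lt_rpow_iff (norm_nonneg _) (norm_nonneg _) (hω i)).mp (by linarith)
  rw [IsUltrametricDist.norm_add_eq_max_of_norm_ne_norm hlt.ne', max_eq_left hlt.le]

end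

theorem tendsto_rpow_norm_ratCast [∀ i, NormedDivisionRing (K i)] (hω : ∀ i, 0 < ω i)
    (hk : ∀ k : ℕ, 0 < k → Tendsto (fun i => ‖(k : K i)‖ ^ ω i) l (𝓝 1)) (r : ℚ) :
    Tendsto (fun i => ‖(r : K i)‖ ^ ω i) l (𝓝 (if r = 0 then 0 else 1)) := by
  split_ifs with hr
  · simpa [hr, Real.zero_rpow (hω _).ne'] using tendsto_const_nhds
  have hquot : ∀ i, ‖(r : K i)‖ ^ ω i = ‖(r.num.natAbs : K i)‖ ^ ω i / ‖(r.den : K i)‖ ^ ω i :=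
    fun i => by rw [Rat.cast_def, norm_div, norm_natAbs, Real.div_rpow (norm_nonneg _) (norm_nonneg _)]
  simpa [hquot, Pi.div_def] using
    (hk _ (Int.natAbs_pos.mpr (Rat.num_ne_zero.mpr hr))).div (hk _ r.pos) one_ne_zero

theorem tendsto_rpow_norm_zero_of_mul [∀ i, NormedDivisionRing (K i)] {a x : ∀ i, K i}
    (ha : Tendsto (fun i => ‖a i‖ ^ ω i) l (𝓝 1))
    (hax : Tendsto (fun i => ‖a i * x i‖ ^ ω i) l (𝓝 0)) :
    Tendsto (fun i => ‖x i‖ ^ ω i) l (𝓝 0) := by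
  refine (zero_div (1 : ℝ) ▸ hax.div ha one_ne_zero).congr' ?_
  filter_upwards [ha.eventually (lt_mem_nhds one_pos)] with i hai
  rw [Pi.div_apply, norm_mul, Real.mul_rpow (norm_nonneg _) (norm_nonneg _), mul_div_cancel_left₀ _ hai.ne']

variable [∀ i, NormedField (K i)] [∀ i, CharZero (K i)] [∀ i, IsUltrametricDist (K i)]

theorem tendsto_rpow_norm_aeval_sub_zero (hω : ∀ i, 0 < ω i)
    (hk : ∀ k : ℕ, 0 < k → Tendsto (fun i => ‖(k : K i)‖ ^ ω i) l (𝓝 1)) {s : ∀ i, K i} {q : ℚ}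
    (hs : Tendsto (fun i => ‖s i - q‖ ^ ω i) l (𝓝 0)) (Q : ℚ[X]) :
    Tendsto (fun i => ‖aeval (s i) Q - (aeval q Q : K i)‖ ^ ω i) l (𝓝 0) := by
  simp_rw [aeval_sub_aeval_ratCast_eq_sum]
  refine tendsto_rpow_norm_sum_zero hω _ fun j _ => ?_
  have := (tendsto_rpow_norm_ratCast hω hk ((taylor q Q).coeff (j + 1))).mul (hs.pow (j + 1))
  simp only [zero_pow j.succ_ne_zero, mul_zero] at this
  refine this.congr fun i => ?_
  rw [Rat.smul_def, norm_mul, norm_pow, Real.mul_rpow (norm_nonneg _) (by positivity),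
    Real.rpow_pow_comm (norm_nonneg _)]

theorem tendsto_rpow_norm_aeval (hω : ∀ i, 0 < ω i)
    (hk : ∀ k : ℕ, 0 < k → Tendsto (fun i => ‖(k : K i)‖ ^ ω i) l (𝓝 1)) {s : ∀ i, K i} {q : ℚ}
    (hs : Tendsto (fun i => ‖s i - q‖ ^ ω i) l (𝓝 0)) (P : ℤ[X]) :
    Tendsto (fun i => ‖aeval (s i) P‖ ^ ω i) l (𝓝 (if aeval q P = 0 then 0 else 1)) := by
  have hd := tendsto_rpow_norm_aeval_sub_zero hω hk hs (P.map (algebraMap ℤ ℚ))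
  simp only [aeval_map_algebraMap] at hd
  have hc := tendsto_rpow_norm_ratCast hω hk (aeval q P)
  refine (?_ : Tendsto (fun i => ‖(aeval q P : K i) + (aeval (s i) P - aeval q P)‖ ^ ω i) l _).congr
    fun i => by rw [add_sub_cancel]
  split_ifs at hc ⊢
  · exact tendsto_rpow_norm_add_zero (fun i => (hω i).le) hc hd
  · exact tendsto_rpow_norm_add_of_tendsto_zero hω one_pos hc hd

end

theorem tendsto_padics_to_rational_iff_general (m : ℤ) (n : ℕ) (hn : 0 < n)
    (p : ℕ → ℕ) [∀ i, Fact (p i).Prime]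
    (ω : ℕ → ℝ) (hω : ∀ i, 0 < ω i) (s : ∀ i, ℚ_[p i]) :
    (∀ P : Polynomial ℤ,
        Filter.Tendsto (fun i => ‖(Polynomial.aeval (s i) P : ℚ_[p i])‖ ^ ω i)
          Filter.atTop
          (nhds (if (Polynomial.aeval ((m : ℚ) / (n : ℚ)) P : ℚ) = 0 then (0 : ℝ) else 1))) ↔
      ((∀ k : ℕ, 0 < k →
          Filter.Tendsto (fun i => ‖((k : ℚ_[p i]))‖ ^ ω i) Filter.atTop (nhds 1)) ∧
        Filter.Tendsto
          (fun i => ‖s i - (((m : ℚ) / (n : ℚ) : ℚ) : ℚ_[p i])‖ ^ ω i)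
          Filter.atTop (nhds 0)) := by
  refine ⟨fun h => ?_, fun ⟨hk, hs⟩ => tendsto_rpow_norm_aeval hω hk hs⟩
  have hk : ∀ k : ℕ, 0 < k → Tendsto (fun i => ‖(k : ℚ_[p i])‖ ^ ω i) atTop (𝓝 1) :=
    fun k hk => by simpa [hk.ne'] using h (C (k : ℤ))
  have hn' : (n : ℚ) ≠ 0 := by exact_mod_cast hn.ne'
  have hlin := h (C (n : ℤ) * X - C m)
  rw [if_pos (by simp [mul_div_cancel₀ _ hn'])] at hlin
  refine ⟨hk, tendsto_rpow_norm_zero_of_mul (hk n hn) (hlin.congr fun i => ?_)⟩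
  simp [mul_sub, mul_div_cancel₀ _ (Nat.cast_ne_zero.mpr hn.ne' : (n : ℚ_[p i]) ≠ 0)]

/-- Let `m ∈ ℤ` and `n ∈ ℕ` be relatively prime, `(p_i)` a sequence of primes, `(ω_i)` a
sequence in `(0,∞)`, and `s_i ∈ ℚ_{p_i}`. The images of the `s_i` under `ℚ_{p_i}^{ω_i}`
converge in `𝔸¹_ℤ` to the image of `m/n ∈ ℚ` (trivial valuation) iff `‖k‖_{p_i}^{ω_i} → 1`
for every positive integer `k` and `‖s_i − m/n‖_{p_i}^{ω_i} → 0`. -/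
theorem tendsto_padics_to_rational_iff (m : ℤ) (n : ℕ) (hn : 0 < n)
    (hmn : IsCoprime m (n : ℤ)) (p : ℕ → ℕ) [∀ i, Fact (p i).Prime]
    (ω : ℕ → ℝ) (hω : ∀ i, 0 < ω i) (s : ∀ i, ℚ_[p i]) :
    (∀ P : Polynomial ℤ,
        Filter.Tendsto (fun i => ‖(Polynomial.aeval (s i) P : ℚ_[p i])‖ ^ ω i)
          Filter.atTop
          (nhds (if (Polynomial.aeval ((m : ℚ) / (n : ℚ)) P : ℚ) = 0 then (0 : ℝ) else 1))) ↔
      ((∀ k : ℕ, 0 < k →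
          Filter.Tendsto (fun i => ‖((k : ℚ_[p i]))‖ ^ ω i) Filter.atTop (nhds 1)) ∧
        Filter.Tendsto
          (fun i => ‖s i - (((m : ℚ) / (n : ℚ) : ℚ) : ℚ_[p i])‖ ^ ω i)
          Filter.atTop (nhds 0)) :=
  tendsto_padics_to_rational_iff_general m n hn p ω hω s
end
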